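/- arXiv:2209.02791 — 2 statements merged into one kernel-verified Lean document; each statement's English description precedes it below -/
import Mathlib

section
/- Let a ∈ ℂ with a ≠ 0 and let m be the continuous self-map of the one-point compactification ℂ ∪ {∞} of the complex plane determined by m(z) = a·z for z ∈ ℂ and m(∞) = ∞. Then m is continuous and homotopic to the identity map of ℂ ∪ {∞}. (The scaling case f₃ in the proof of Proposition 5.3.) -/
/-!
Since `ℂ ∖ {0}` is path-connected, there is a path `γ` from `a` to `1` avoiding `0`, and
`H(t, z) = γ t • z`, `H(t, ∞) = ∞` is the homotopy. It is continuous at `(t, ∞)` because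
`‖γ s • z‖ ≥ (‖γ t‖ / 2) ‖z‖` for `s` near `t`, so `H` sends neighbourhoods of `(t, ∞)`
into neighbourhoods of `∞`.
-/

open OnePoint Filter Topology Bornology

namespace OnePoint

variable {X Y Z : Type*} [TopologicalSpace X] [TopologicalSpace Y] [TopologicalSpace Z]

theorem continuous_prod_map_of_tendsto {F : X × Y → Z} (hF : Continuous F)
    (hF_infty : ∀ x, Tendsto F (𝓝 x ×ˢ coclosedCompact Y) (coclosedCompact Z)) :
    Continuous fun p : X × OnePoint Y => p.2.map fun y => F (p.1, y) := by
  refine continuous_iff_continuousAt.2 fun ⟨x, p⟩ => ?_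
  induction p with
  | infty =>
    rw [ContinuousAt, nhds_prod_eq, nhds_infty_eq, prod_sup, tendsto_sup, prod_map_right,
      prod_pure, tendsto_map'_iff, tendsto_map'_iff]
    exact ⟨tendsto_coe_infty.comp (hF_infty x), tendsto_const_nhds⟩
  | coe y =>
    refine (IsOpenEmbedding.id.prodMap isOpenEmbedding_coe).continuousAt_iff (x := (x, y)) |>.1 ?_
    exact (continuous_coe.comp hF).continuousAt

end OnePoint

theorem tendsto_smul_cobounded {X 𝕜 E : Type*} [TopologicalSpace X] [NormedField 𝕜]
    [NormedAddCommGroup E] [NormedSpace 𝕜 E] {q : X → 𝕜} (hq : Continuous q) {x : X}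
    (hx : q x ≠ 0) :
    Tendsto (fun p : X × E => q p.1 • p.2) (𝓝 x ×ˢ cobounded E) (cobounded E) := by
  have h_lower : ∀ᶠ p : X × E in 𝓝 x ×ˢ cobounded E, ‖q x‖ / 2 * ‖p.2‖ ≤ ‖q p.1 • p.2‖ := by
    have : ∀ᶠ s in 𝓝 x, ‖q x‖ / 2 < ‖q s‖ :=
      hq.norm.continuousAt.eventually_const_lt (half_lt_self (norm_pos_iff.2 hx))
    filter_upwards [this.prod_inl _] with p hp
    rw [norm_smul]
    gcongr
  rw [← tendsto_norm_atTop_iff_cobounded]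
  refine tendsto_atTop_mono' _ h_lower ?_
  exact (tendsto_norm_cobounded_atTop.comp tendsto_snd).const_mul_atTop (by positivity)

theorem homotopic_onePointCongr_smulOfNeZero_id {E : Type*} [NormedAddCommGroup E]
    [NormedSpace ℂ E] [ProperSpace E] {a : ℂ} (ha : a ≠ 0) :
    ContinuousMap.Homotopic
      ((Homeomorph.smulOfNeZero (α := E) a ha).onePointCongr : C(OnePoint E, OnePoint E))
      (ContinuousMap.id (OnePoint E)) := by
  have h_joined : JoinedIn {0}ᶜ a 1 := (isPathConnected_compl_singleton_of_one_lt_rank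
    (by simp [Complex.rank_real_complex]) (0 : ℂ)).joinedIn a ha 1 one_ne_zero
  set γ := h_joined.somePath
  have hF_infty (t : unitInterval) : Tendsto (fun p : unitInterval × E => γ p.1 • p.2)
      (𝓝 t ×ˢ coclosedCompact E) (coclosedCompact E) := by
    simpa only [coclosedCompact_eq_cocompact, ← Metric.cobounded_eq_cocompact] using
      tendsto_smul_cobounded γ.continuous (h_joined.somePath_mem t)
  refine ⟨⟨⟨_, continuous_prod_map_of_tendsto (by fun_prop) hF_infty⟩, fun p => ?_, fun p => ?_⟩⟩
  all_goals induction p <;> simp [γ]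

/-- The scaling case in the proof of Proposition 5.3: for `a ≠ 0`, the self-map
`z ↦ a * z`, `∞ ↦ ∞` of the Riemann sphere `ℂ ∪ {∞}` is continuous and
homotopic to the identity. -/
theorem scaling_homotopic_id
    (a : ℂ) (ha : a ≠ 0) (m : OnePoint ℂ → OnePoint ℂ)
    (hm : ∀ z : ℂ, m (z : OnePoint ℂ) = ((a * z : ℂ) : OnePoint ℂ))
    (hminf : m ∞ = ∞) :
    ∃ hc : Continuous m,
      (⟨m, hc⟩ : C(OnePoint ℂ, OnePoint ℂ)).Homotopic (ContinuousMap.id (OnePoint ℂ)) := by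
  have hm_eq : m = (Homeomorph.smulOfNeZero (α := ℂ) a ha).onePointCongr := by
    funext p
    induction p with
    | infty => exact hminf
    | coe z => exact hm z
  subst hm_eq
  exact ⟨_, homotopic_onePointCongr_smulOfNeZero_id ha⟩
end

section
/- Let a, b ∈ ℂ with a ≠ 0 and let m be the continuous self-map of the one-point compactification ℂ ∪ {∞} of the complex plane determined by m(z) = a·z + b for z ∈ ℂ and m(∞) = ∞. Then m is continuous and homotopic to the identity map of ℂ ∪ {∞}. (The affine case, covering Möbius transformations with c = 0, in Proposition 5.3.) -/
/-!
Shrink the coefficients along the path `t ↦ (a ^ (1 - t), (1 - t) b)` from `(a, b)` to `(1, 0)`,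
with `a ^ (1 - t) := exp ((1 - t) log a)`, which never vanishes. Each map `z ↦ A z + B` with
`A ≠ 0` sends a neighbourhood of `∞` into a neighbourhood of `∞`, locally uniformly in the
parameter, so the family extends continuously over `I × (ℂ ∪ {∞})`.
-/

open OnePoint Filter Topology Bornology Function

theorem OnePoint.continuous_map_uncurry {X E F : Type*} [TopologicalSpace X] [TopologicalSpace E]
    [TopologicalSpace F] {f : X → E → F} (hf : Continuous (uncurry f))
    (hf_infty : ∀ x, Tendsto (uncurry f) (𝓝 x ×ˢ coclosedCompact E) (coclosedCompact F)) :
    Continuous fun q : X × OnePoint E => q.2.map (f q.1) := by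
  refine continuous_iff_continuousAt.2 fun ⟨x, e⟩ => ?_
  induction e using OnePoint.rec with
  | infty =>
    rw [ContinuousAt, nhds_prod_eq, nhds_infty_eq, prod_sup, tendsto_sup, prod_map_right,
      prod_pure, tendsto_map'_iff, tendsto_map'_iff]
    exact ⟨tendsto_coe_infty.comp (hf_infty x), tendsto_const_nhds⟩
  | coe e =>
    rw [ContinuousAt, nhds_prod_eq, nhds_coe_eq, prod_map_right, tendsto_map'_iff,
      ← nhds_prod_eq]
    exact (continuous_coe.comp hf).continuousAt

theorem tendsto_mul_add_cobounded {X 𝕜 : Type*} [TopologicalSpace X] [NormedField 𝕜]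
    {A B : X → 𝕜} {x : X} (hA : ContinuousAt A x) (hB : ContinuousAt B x) (hAx : A x ≠ 0) :
    Tendsto (fun p : X × 𝕜 => A p.1 * p.2 + B p.1) (𝓝 x ×ˢ cobounded 𝕜) (cobounded 𝕜) := by
  rw [← tendsto_norm_atTop_iff_cobounded]
  have hAz : Tendsto (fun p : X × 𝕜 => ‖A p.1‖ * ‖p.2‖) (𝓝 x ×ˢ cobounded 𝕜) atTop :=
    Tendsto.pos_mul_atTop (norm_pos_iff.2 hAx) (hA.norm.tendsto.comp tendsto_fst)
      (tendsto_norm_cobounded_atTop.comp tendsto_snd)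
  refine tendsto_atTop_mono (fun p => ?_) (hAz.atTop_add (hB.norm.tendsto.comp tendsto_fst).neg)
  simpa [norm_mul, sub_eq_add_neg] using norm_sub_le_norm_add (A p.1 * p.2) (B p.1)

theorem OnePoint.continuous_map_mul_add {X 𝕜 : Type*} [TopologicalSpace X] [NormedField 𝕜]
    [ProperSpace 𝕜] {A B : X → 𝕜} (hA : Continuous A) (hB : Continuous B) (hA₀ : ∀ x, A x ≠ 0) :
    Continuous fun q : X × OnePoint 𝕜 => q.2.map (fun z => A q.1 * z + B q.1) := by
  refine OnePoint.continuous_map_uncurry (f := fun x z => A x * z + B x) (by fun_prop) fun x => ?_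
  rw [coclosedCompact_eq_cocompact, ← Metric.cobounded_eq_cocompact]
  exact tendsto_mul_add_cobounded hA.continuousAt hB.continuousAt (hA₀ x)

/-- The affine case (Möbius transformations with `c = 0`) in Proposition 5.3:
for `a ≠ 0`, the self-map `z ↦ a * z + b`, `∞ ↦ ∞` of the Riemann sphere
`ℂ ∪ {∞}` is continuous and homotopic to the identity. -/
theorem affine_homotopic_id
    (a b : ℂ) (ha : a ≠ 0) (m : OnePoint ℂ → OnePoint ℂ)
    (hm : ∀ z : ℂ, m (z : OnePoint ℂ) = ((a * z + b : ℂ) : OnePoint ℂ))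
    (hminf : m ∞ = ∞) :
    ∃ hc : Continuous m,
      (⟨m, hc⟩ : C(OnePoint ℂ, OnePoint ℂ)).Homotopic (ContinuousMap.id (OnePoint ℂ)) := by
  have hm_map : m = OnePoint.map (fun z => a * z + b) := by
    funext p
    induction p using OnePoint.rec <;> simp [hm, hminf]
  subst hm_map
  let A : unitInterval → ℂ := fun t => Complex.exp ((1 - (t : ℝ)) * Complex.log a)
  let B : unitInterval → ℂ := fun t => (1 - (t : ℝ)) * b
  have hH := OnePoint.continuous_map_mul_add (A := A) (B := B) (by fun_prop) (by fun_prop)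
    fun _ => Complex.exp_ne_zero _
  have h₀ : ∀ p : OnePoint ℂ, p.map (fun z => A 0 * z + B 0) = p.map (fun z => a * z + b) := by
    simp [A, B, Complex.exp_log ha]
  have h₁ : ∀ p : OnePoint ℂ, p.map (fun z => A 1 * z + B 1) = p := by
    intro p
    induction p using OnePoint.rec <;> simp [A, B]
  refine ⟨by simpa only [comp_def, h₀] using hH.comp (Continuous.prodMk_right 0),
    ⟨{ toFun := _, continuous_toFun := hH, map_zero_left := h₀, map_one_left := h₁ }⟩⟩
end
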